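/- arXiv:2406.04051 — 5 statements merged into one kernel-verified Lean document; each statement's English description precedes it below -/
import Mathlib

section
/- With ρ as above and W, Z on the boundary {ρ = 0} with W ≠ Z, if the Hessian form Q_{(1−t₀)W+t₀Z}(W − Z) vanishes for some t₀ ∈ (0,1), then z_{(s+1)} = w_{(s+1)}, and for each k ∈ {1,…,s}, either z_{(k)} = w_{(k)} or (1−t₀)w_{(k)} + t₀ z_{(k)} = 0 (i.e., z_{(k)} = ((t₀−1)/t₀) w_{(k)}); moreover at least one index k satisfies the second alternative. -/
open scoped BigOperators
open Finset

noncomputable section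

/-- Defining function of the generalized pseudoellipsoid. -/
def rho {s : ℕ} {m : Fin (s + 1) → ℕ} (α : Fin s → ℕ)
    (Z : ∀ k, EuclideanSpace ℂ (Fin (m k))) : ℝ :=
  (∑ k : Fin s, ‖Z k.castSucc‖ ^ (2 * α k)) + ‖Z (Fin.last s)‖ ^ 2 - 1

/-- The real Hessian form `Q_X(v)` of `ρ` at `X`, in closed form. -/
def Qform {s : ℕ} {m : Fin (s + 1) → ℕ} (α : Fin s → ℕ)
    (X v : ∀ k, EuclideanSpace ℂ (Fin (m k))) : ℝ :=
  (∑ k : Fin s, (α k : ℝ) * ‖X k.castSucc‖ ^ (2 * α k - 4) *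
      (((α k : ℝ) - 1) * ((inner ℂ (X k.castSucc) (v k.castSucc) : ℂ).re) ^ 2
        + ‖X k.castSucc‖ ^ 2 * ‖v k.castSucc‖ ^ 2))
    + ‖v (Fin.last s)‖ ^ 2

/-- If the Hessian form `Q` along the segment vanishes at `W − Z ≠ 0` for boundary
points `W, Z`, then the last blocks agree, each block satisfies
`z_(k) = w_(k)` or `(1−t₀)w_(k) + t₀ z_(k) = 0`, and at least one block satisfies
the second alternative. -/
theorem degenerate_form_of_Q_eq_zero {s : ℕ} (m : Fin (s + 1) → ℕ) (α : Fin s → ℕ)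
    (hα : ∀ k, 2 ≤ α k)
    (W Z : ∀ k, EuclideanSpace ℂ (Fin (m k)))
    (hW : rho α W = 0) (hZ : rho α Z = 0) (hne : W ≠ Z)
    (t₀ : ℝ) (ht₀ : t₀ ∈ Set.Ioo (0 : ℝ) 1)
    (hQ : Qform α (fun k => (1 - t₀) • W k + t₀ • Z k) (fun k => W k - Z k) = 0) :
    Z (Fin.last s) = W (Fin.last s) ∧
    (∀ k : Fin s, Z k.castSucc = W k.castSucc ∨
      (1 - t₀) • W k.castSucc + t₀ • Z k.castSucc = 0) ∧
    (∃ k : Fin s, (1 - t₀) • W k.castSucc + t₀ • Z k.castSucc = 0) := by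
  set X : ∀ k, EuclideanSpace ℂ (Fin (m k)) := fun k => (1 - t₀) • W k + t₀ • Z k with hX
  set v : ∀ k, EuclideanSpace ℂ (Fin (m k)) := fun k => W k - Z k with hv
  have hterm : ∀ k : Fin s,
      0 ≤ (α k : ℝ) * ‖X k.castSucc‖ ^ (2 * α k - 4) *
        (((α k : ℝ) - 1) * ((inner ℂ (X k.castSucc) (v k.castSucc) : ℂ).re) ^ 2
          + ‖X k.castSucc‖ ^ 2 * ‖v k.castSucc‖ ^ 2) := by
    intro k
    have h1 : (0:ℝ) ≤ (α k : ℝ) - 1 := by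
      have := hα k; have : (2:ℝ) ≤ (α k : ℝ) := by exact_mod_cast this
      linarith
    positivity
  have hsum0 : (∑ k : Fin s, (α k : ℝ) * ‖X k.castSucc‖ ^ (2 * α k - 4) *
      (((α k : ℝ) - 1) * ((inner ℂ (X k.castSucc) (v k.castSucc) : ℂ).re) ^ 2
        + ‖X k.castSucc‖ ^ 2 * ‖v k.castSucc‖ ^ 2)) = 0 ∧ ‖v (Fin.last s)‖ ^ 2 = 0 := by
    have hS : 0 ≤ ∑ k : Fin s, (α k : ℝ) * ‖X k.castSucc‖ ^ (2 * α k - 4) *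
        (((α k : ℝ) - 1) * ((inner ℂ (X k.castSucc) (v k.castSucc) : ℂ).re) ^ 2
          + ‖X k.castSucc‖ ^ 2 * ‖v k.castSucc‖ ^ 2) :=
      Finset.sum_nonneg fun k _ => hterm k
    have hL : (0:ℝ) ≤ ‖v (Fin.last s)‖ ^ 2 := by positivity
    have hQ' : (∑ k : Fin s, (α k : ℝ) * ‖X k.castSucc‖ ^ (2 * α k - 4) *
        (((α k : ℝ) - 1) * ((inner ℂ (X k.castSucc) (v k.castSucc) : ℂ).re) ^ 2
          + ‖X k.castSucc‖ ^ 2 * ‖v k.castSucc‖ ^ 2)) + ‖v (Fin.last s)‖ ^ 2 = 0 := hQ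
    constructor <;> linarith
  have hlast : Z (Fin.last s) = W (Fin.last s) := by
    have := hsum0.2
    have : v (Fin.last s) = 0 := by
      have := pow_eq_zero_iff (n := 2) (by norm_num) |>.mp this
      exact norm_eq_zero.mp this
    have : W (Fin.last s) - Z (Fin.last s) = 0 := this
    have := sub_eq_zero.mp this
    exact this.symm
  have heach : ∀ k ∈ Finset.univ, (α k : ℝ) * ‖X k.castSucc‖ ^ (2 * α k - 4) *
      (((α k : ℝ) - 1) * ((inner ℂ (X k.castSucc) (v k.castSucc) : ℂ).re) ^ 2
        + ‖X k.castSucc‖ ^ 2 * ‖v k.castSucc‖ ^ 2) = 0 :=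
    (Finset.sum_eq_zero_iff_of_nonneg (fun k _ => hterm k)).mp hsum0.1
  have hblocks : ∀ k : Fin s, Z k.castSucc = W k.castSucc ∨ X k.castSucc = 0 := by
    intro k
    have hk := heach k (Finset.mem_univ k)
    by_cases hXk : X k.castSucc = 0
    · exact Or.inr hXk
    · left
      have hXn : (0:ℝ) < ‖X k.castSucc‖ := norm_pos_iff.mpr hXk
      have hαpos : (0:ℝ) < (α k : ℝ) := by
        have := hα k; positivity
      have hpow : (0:ℝ) < ‖X k.castSucc‖ ^ (2 * α k - 4) := pow_pos hXn _
      have h1 : (0:ℝ) ≤ (α k : ℝ) - 1 := by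
        have : (2:ℝ) ≤ (α k : ℝ) := by exact_mod_cast hα k
        linarith
      have hsum : ((α k : ℝ) - 1) * ((inner ℂ (X k.castSucc) (v k.castSucc) : ℂ).re) ^ 2
          + ‖X k.castSucc‖ ^ 2 * ‖v k.castSucc‖ ^ 2 = 0 := by
        have hmul := mul_eq_zero.mp hk
        rcases hmul with h | h
        · rcases mul_eq_zero.mp h with h | h
          · exact absurd h hαpos.ne'
          · exact absurd h hpow.ne'
        · exact h
      have ht1 : (0:ℝ) ≤ ((α k : ℝ) - 1) * ((inner ℂ (X k.castSucc) (v k.castSucc) : ℂ).re) ^ 2 := by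
        positivity
      have ht2 : (0:ℝ) ≤ ‖X k.castSucc‖ ^ 2 * ‖v k.castSucc‖ ^ 2 := by positivity
      have h2 : ‖X k.castSucc‖ ^ 2 * ‖v k.castSucc‖ ^ 2 = 0 := by linarith
      have hv0 : ‖v k.castSucc‖ ^ 2 = 0 := by
        rcases mul_eq_zero.mp h2 with h | h
        · exact absurd h (by positivity)
        · exact h
      have : v k.castSucc = 0 := by
        have := pow_eq_zero_iff (n := 2) (by norm_num) |>.mp hv0
        exact norm_eq_zero.mp this
      have : W k.castSucc - Z k.castSucc = 0 := this
      exact (sub_eq_zero.mp this).symm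
  refine ⟨hlast, hblocks, ?_⟩
  by_contra h
  push_neg at h
  apply hne
  funext j
  induction j using Fin.lastCases with
  | last => exact hlast.symm
  | cast k =>
    rcases hblocks k with h' | h'
    · exact h'.symm
    · exact absurd h' (h k)
end
end

section
/- For integers α_1,…,α_s ≥ 2 and w_{(1)},…,w_{(s)} with 0 ≤ ||w_{(1)}||^{2α_1} + … + ||w_{(s)}||^{2α_s} ≤ 1, the inequality ((α_1−1)||w_{(1)}||^{2α_1} + … + (α_s−1)||w_{(s)}||^{2α_s} + 1) / √(α_1²||w_{(1)}||^{4α_1−2} − ||w_{(1)}||^{2α_1} + … + α_s²||w_{(s)}||^{4α_s−2} − ||w_{(s)}||^{2α_s} + 1) ≥ 1 holds. -/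
open scoped BigOperators
open Finset

noncomputable section

lemma key_poly (b : ℕ) (hb : 1 ≤ b) (t : ℝ) (ht0 : 0 ≤ t) (ht1 : t ≤ 1) :
    ((b : ℝ) + 1) ^ 2 * t ^ b ≤ (b : ℝ) ^ 2 * t ^ (b + 1) + (2 * b + 1) := by
  induction b, hb using Nat.le_induction with
  | base =>
      push_cast
      nlinarith [sq_nonneg (t - 1), pow_one t]
  | succ b hb IH =>
      have h1 : t ^ (b + 1) ≤ 1 := pow_le_one₀ ht0 ht1
      have h2 : (0:ℝ) ≤ t ^ (b + 1) := pow_nonneg ht0 _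
      have hIHt := mul_le_mul_of_nonneg_right IH ht0
      push_cast at hIHt ⊢
      nlinarith [pow_succ t b, pow_succ t (b + 1),
        mul_nonneg (sub_nonneg.mpr ht1) (sub_nonneg.mpr h1)]

lemma perterm (a : ℕ) (ha : 2 ≤ a) (n : ℝ) (hn0 : 0 ≤ n) (hn1 : n ≤ 1) :
    (a : ℝ) ^ 2 * n ^ (4 * a - 2) - n ^ (2 * a) ≤
      (((a : ℝ) - 1) * n ^ (2 * a)) ^ 2 + 2 * (((a : ℝ) - 1) * n ^ (2 * a)) := by
  have ht0 : (0:ℝ) ≤ n ^ 2 := sq_nonneg n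
  have ht1 : n ^ 2 ≤ 1 := by nlinarith
  have hkey := key_poly (a - 1) (by omega) (n ^ 2) ht0 ht1
  have hc : ((a - 1 : ℕ) : ℝ) = (a : ℝ) - 1 := by
    have : 1 ≤ a := by omega
    push_cast [Nat.cast_sub this]; ring
  rw [hc] at hkey
  have he : a - 1 + 1 = a := by omega
  rw [he] at hkey
  have h4 : n ^ (4 * a - 2) = (n ^ 2) ^ (a - 1) * (n ^ 2) ^ a := by
    rw [← pow_add, ← pow_mul]
    congr 1
    omega
  have h2a : n ^ (2 * a) = (n ^ 2) ^ a := by rw [← pow_mul]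
  rw [h4, h2a]
  have hx0 : (0:ℝ) ≤ (n ^ 2) ^ a := pow_nonneg ht0 a
  have := mul_le_mul_of_nonneg_right hkey hx0
  nlinarith [this]

lemma sum_sq_le_sq_sum {s : ℕ} (y : Fin s → ℝ) (hy : ∀ k, 0 ≤ y k) :
    ∑ k, (y k) ^ 2 ≤ (∑ k, y k) ^ 2 := by
  have hS : ∀ k, y k ≤ ∑ j, y j := fun k =>
    Finset.single_le_sum (fun j _ => hy j) (Finset.mem_univ k)
  calc ∑ k, (y k) ^ 2 ≤ ∑ k, y k * (∑ j, y j) := by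
        apply Finset.sum_le_sum
        intro k _
        rw [sq]
        exact mul_le_mul_of_nonneg_left (hS k) (hy k)
    _ = (∑ k, y k) ^ 2 := by rw [← Finset.sum_mul, sq]

/-- The key inequality of Lemma 2.3: for vectors `w_(k)` with
`Σ_k ‖w_(k)‖^{2α_k} ≤ 1` and integers `α_k ≥ 2`, the ratio
`((Σ_k (α_k−1)‖w_(k)‖^{2α_k}) + 1) / √((Σ_k α_k²‖w_(k)‖^{4α_k−2} − ‖w_(k)‖^{2α_k}) + 1)`
is at least `1` (and the radicand is positive). -/
theorem ratio_ge_one {s : ℕ} (m : Fin s → ℕ) (α : Fin s → ℕ)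
    (hα : ∀ k, 2 ≤ α k)
    (w : ∀ k, EuclideanSpace ℂ (Fin (m k)))
    (hsum : ∑ k, ‖w k‖ ^ (2 * α k) ≤ 1) :
    0 < (∑ k, ((α k : ℝ) ^ 2 * ‖w k‖ ^ (4 * α k - 2) - ‖w k‖ ^ (2 * α k))) + 1 ∧
    1 ≤ ((∑ k, ((α k : ℝ) - 1) * ‖w k‖ ^ (2 * α k)) + 1) /
        Real.sqrt ((∑ k, ((α k : ℝ) ^ 2 * ‖w k‖ ^ (4 * α k - 2)
          - ‖w k‖ ^ (2 * α k))) + 1) := by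
  set n : Fin s → ℝ := fun k => ‖w k‖ with hn
  have hn0 : ∀ k, 0 ≤ n k := fun k => norm_nonneg _
  have hx0 : ∀ k, 0 ≤ n k ^ (2 * α k) := fun k => pow_nonneg (hn0 k) _
  have hx1 : ∀ k, n k ^ (2 * α k) ≤ 1 := fun k =>
    le_trans (Finset.single_le_sum (fun j _ => hx0 j) (Finset.mem_univ k)) hsum
  have hn1 : ∀ k, n k ≤ 1 := by
    intro k
    exact (pow_le_one_iff_of_nonneg (hn0 k) (by have := hα k; omega)).mp (hx1 k)
  -- positivity of the radicand
  have hA0 : ∀ k, (0:ℝ) ≤ (α k : ℝ) ^ 2 * n k ^ (4 * α k - 2) := fun k =>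
    mul_nonneg (sq_nonneg _) (pow_nonneg (hn0 k) _)
  have hsplit : (∑ k, ((α k : ℝ) ^ 2 * n k ^ (4 * α k - 2) - n k ^ (2 * α k)))
      = (∑ k, (α k : ℝ) ^ 2 * n k ^ (4 * α k - 2)) - ∑ k, n k ^ (2 * α k) :=
    Finset.sum_sub_distrib _ _
  have hRpos : 0 < (∑ k, ((α k : ℝ) ^ 2 * n k ^ (4 * α k - 2) - n k ^ (2 * α k))) + 1 := by
    rw [hsplit]
    rcases lt_or_eq_of_le hsum with h | h
    · have : 0 ≤ ∑ k, (α k : ℝ) ^ 2 * n k ^ (4 * α k - 2) :=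
        Finset.sum_nonneg fun k _ => hA0 k
      linarith
    · obtain ⟨k, hk⟩ : ∃ k, n k ^ (2 * α k) ≠ 0 := by
        by_contra hall
        push_neg at hall
        have : (∑ k, n k ^ (2 * α k)) = 0 := Finset.sum_eq_zero fun k _ => hall k
        rw [this] at h; norm_num at h
      have hnk : 0 < n k := by
        rcases (hn0 k).lt_or_eq with h' | h'
        · exact h'
        · exfalso; apply hk; rw [← h']; exact zero_pow (by have := hα k; omega)
      have hterm : 0 < (α k : ℝ) ^ 2 * n k ^ (4 * α k - 2) := by
        have hα2 := hα k
        apply mul_pos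
        · positivity
        · exact pow_pos hnk _
      have : 0 < ∑ k, (α k : ℝ) ^ 2 * n k ^ (4 * α k - 2) :=
        lt_of_lt_of_le hterm (Finset.single_le_sum (fun j _ => hA0 j) (Finset.mem_univ k))
      linarith
  refine ⟨hRpos, ?_⟩
  set N : ℝ := (∑ k, ((α k : ℝ) - 1) * n k ^ (2 * α k)) + 1 with hN
  have hy0 : ∀ k, 0 ≤ ((α k : ℝ) - 1) * n k ^ (2 * α k) := fun k => by
    have := hα k
    have : (1:ℝ) ≤ (α k : ℝ) := by exact_mod_cast by omega
    exact mul_nonneg (by linarith) (hx0 k)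
  have hySnn : 0 ≤ ∑ k, ((α k : ℝ) - 1) * n k ^ (2 * α k) :=
    Finset.sum_nonneg fun k _ => hy0 k
  have hRle : (∑ k, ((α k : ℝ) ^ 2 * n k ^ (4 * α k - 2) - n k ^ (2 * α k))) + 1 ≤ N ^ 2 := by
    have h1 : (∑ k, ((α k : ℝ) ^ 2 * n k ^ (4 * α k - 2) - n k ^ (2 * α k))) ≤
        ∑ k, ((((α k : ℝ) - 1) * n k ^ (2 * α k)) ^ 2
          + 2 * (((α k : ℝ) - 1) * n k ^ (2 * α k))) := by
      apply Finset.sum_le_sum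
      intro k _
      exact perterm (α k) (hα k) (n k) (hn0 k) (hn1 k)
    have h2 : ∑ k, ((((α k : ℝ) - 1) * n k ^ (2 * α k)) ^ 2
          + 2 * (((α k : ℝ) - 1) * n k ^ (2 * α k)))
        = (∑ k, (((α k : ℝ) - 1) * n k ^ (2 * α k)) ^ 2)
          + 2 * ∑ k, ((α k : ℝ) - 1) * n k ^ (2 * α k) := by
      rw [Finset.sum_add_distrib, Finset.mul_sum]
    have h3 := sum_sq_le_sq_sum (fun k => ((α k : ℝ) - 1) * n k ^ (2 * α k)) hy0
    have : N ^ 2 = (∑ k, ((α k : ℝ) - 1) * n k ^ (2 * α k)) ^ 2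
        + 2 * ∑ k, ((α k : ℝ) - 1) * n k ^ (2 * α k) + 1 := by rw [hN]; ring
    rw [this]
    linarith
  have hNpos : 0 < N := by rw [hN]; linarith
  have hsqrt : Real.sqrt ((∑ k, ((α k : ℝ) ^ 2 * n k ^ (4 * α k - 2) - n k ^ (2 * α k))) + 1)
      ≤ N := by
    calc Real.sqrt _ ≤ Real.sqrt (N ^ 2) := Real.sqrt_le_sqrt hRle
      _ = N := Real.sqrt_sq hNpos.le
  have hgoal : (1:ℝ) ≤ N /
      Real.sqrt ((∑ k, ((α k : ℝ) ^ 2 * n k ^ (4 * α k - 2) - n k ^ (2 * α k))) + 1) := by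
    rw [le_div_iff₀ (Real.sqrt_pos.mpr hRpos)]
    linarith
  exact hgoal
end
end

section
/- Let τ ≥ T ≥ 1 and let W lie on the boundary {ρ = 0} of the generalized pseudoellipsoid E((m);(α)) (so Σ_k ||w_{(k)}||^{2α_k} + ||w_{(s+1)}||² = 1, W ≠ 0). Set Z = W/τ. Then Re⟨W − Z, N(W)/||N(W)||⟩ = (1 − 1/τ) · (α_1||w_{(1)}||^{2α_1} + … + α_s||w_{(s)}||^{2α_s} + ||w_{(s+1)}||²) / √(α_1²||w_{(1)}||^{4α_1−2} + … + α_s²||w_{(s)}||^{4α_s−2} + ||w_{(s+1)}||²) and this quantity is ≥ 1 − 1/τ ≥ 1 − 1/T. -/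
open scoped BigOperators
open Finset

noncomputable section

/-- Paper pairing `⟨A,B⟩ = Σ_j A^j conj(B^j)`, blockwise. -/
def pairH {s : ℕ} {m : Fin (s + 1) → ℕ}
    (A B : ∀ k, EuclideanSpace ℂ (Fin (m k))) : ℂ :=
  ∑ k : Fin (s + 1), (inner ℂ (B k) (A k) : ℂ)

/-- The conjugate gradient `N(W)`, blockwise. -/
def Ngrad {s : ℕ} {m : Fin (s + 1) → ℕ} (α : Fin s → ℕ)
    (W : ∀ k, EuclideanSpace ℂ (Fin (m k))) :
    ∀ k, EuclideanSpace ℂ (Fin (m k)) :=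
  fun k => Fin.lastCases (W (Fin.last s))
    (fun j => ((α j : ℝ) * ‖W j.castSucc‖ ^ (2 * α j - 2)) • W j.castSucc) k

/-- Euclidean norm of a block vector. -/
def normFull {s : ℕ} {m : Fin (s + 1) → ℕ}
    (A : ∀ k, EuclideanSpace ℂ (Fin (m k))) : ℝ :=
  Real.sqrt (∑ k : Fin (s + 1), ‖A k‖ ^ 2)

lemma geom_aux (y : ℝ) (hy0 : 0 ≤ y) (hy1 : y ≤ 1) (n : ℕ) :
    ((n : ℝ) + 1) * y ^ n * (1 - y) ≤ 1 - y ^ (n + 1) := by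
  induction n with
  | zero => simp
  | succ n ih =>
      have hyp : y ^ (n + 1) ≤ y ^ n := pow_le_pow_of_le_one hy0 hy1 (by omega)
      have h0 : 0 ≤ y ^ n := pow_nonneg hy0 n
      have h1 : (0 : ℝ) ≤ 1 - y := by linarith
      have key : (0:ℝ) ≤ ((n:ℝ)+1) * (1 - y) * (y ^ n - y ^ (n+1)) :=
        mul_nonneg (mul_nonneg (by positivity) h1) (by linarith)
      push_cast
      rw [pow_succ y (n+1), pow_succ y n] at *
      nlinarith [pow_nonneg hy0 (n+1)]

lemma key_term (b : ℕ) (z : ℝ) (hz0 : 0 ≤ z) (hz1 : z ≤ 1) :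
    ((b : ℝ) + 2) ^ 2 * z ^ (2 * b + 3) ≤
      (2 * (b : ℝ) + 3) * z ^ (b + 2) + ((b : ℝ) + 1) ^ 2 * z ^ (2 * b + 4) := by
  have hg := geom_aux z hz0 hz1 b
  have hp0 : 0 ≤ z ^ b := pow_nonneg hz0 b
  have hzb1 : z ^ (b+1) ≤ 1 := pow_le_one₀ hz0 hz1
  have h : ((b : ℝ) + 2) ^ 2 * z ^ (b + 1) ≤
      (2 * (b : ℝ) + 3) + ((b : ℝ) + 1) ^ 2 * z ^ (b + 2) := by
    have h2 : ((b:ℝ)+1) * z * (((b:ℝ)+1) * z ^ b * (1 - z)) ≤ ((b:ℝ)+1) * z * (1 - z ^ (b+1)) :=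
      mul_le_mul_of_nonneg_left hg (by positivity)
    have h3 : ((b:ℝ)+1) * z * (1 - z ^ (b+1)) ≤ (2*(b:ℝ)+3) * (1 - z ^ (b+1)) := by
      have : ((b:ℝ)+1) * z ≤ 2*(b:ℝ)+3 := by nlinarith
      exact mul_le_mul_of_nonneg_right this (by linarith)
    rw [pow_succ z (b+1), pow_succ z b] at *
    nlinarith
  calc ((b : ℝ) + 2) ^ 2 * z ^ (2 * b + 3)
      = (((b : ℝ) + 2) ^ 2 * z ^ (b + 1)) * z ^ (b + 2) := by
        rw [mul_assoc, ← pow_add]; ring_nf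
    _ ≤ ((2 * (b : ℝ) + 3) + ((b : ℝ) + 1) ^ 2 * z ^ (b + 2)) * z ^ (b + 2) :=
        mul_le_mul_of_nonneg_right h (pow_nonneg hz0 _)
    _ = (2 * (b : ℝ) + 3) * z ^ (b + 2) + ((b : ℝ) + 1) ^ 2 * z ^ (2 * b + 4) := by
        rw [add_mul, mul_assoc, ← pow_add]; ring_nf

/-- Lemma 2.3: for `W ∈ ∂E((m);(α))` and `Z = W/τ` with `τ ≥ T ≥ 1`,
`Re⟨W − Z, N(W)/‖N(W)‖⟩` equals the displayed quotient and is `≥ 1 − 1/τ ≥ 1 − 1/T`. -/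
theorem re_pairing_scaled_point {s : ℕ} (m : Fin (s + 1) → ℕ) (α : Fin s → ℕ)
    (hα : ∀ k, 2 ≤ α k) (T τ : ℝ) (hT : 1 ≤ T) (hτ : T ≤ τ)
    (W : ∀ k, EuclideanSpace ℂ (Fin (m k)))
    (hW : rho α W = 0) (hW0 : W ≠ 0) :
    (pairH (fun k => W k - τ⁻¹ • W k) (Ngrad α W)).re / normFull (Ngrad α W)
      = (1 - 1 / τ) *
        ((∑ k : Fin s, (α k : ℝ) * ‖W k.castSucc‖ ^ (2 * α k)) + ‖W (Fin.last s)‖ ^ 2) /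
        Real.sqrt ((∑ k : Fin s, (α k : ℝ) ^ 2 * ‖W k.castSucc‖ ^ (4 * α k - 2))
          + ‖W (Fin.last s)‖ ^ 2) ∧
    1 - 1 / τ ≤
      (pairH (fun k => W k - τ⁻¹ • W k) (Ngrad α W)).re / normFull (Ngrad α W) ∧
    1 - 1 / T ≤ 1 - 1 / τ := by
  have hco : ∀ r : ℝ, (RCLike.ofReal r : ℂ) = (r : ℂ) := fun r => rfl
  have hsm : ∀ {n : ℕ} (r : ℝ) (x : EuclideanSpace ℂ (Fin n)), r • x = (r : ℂ) • x := by
    intro n r x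
    rw [← algebraMap_smul ℂ r x, Complex.coe_algebraMap]
  have hexp : ∀ j : Fin s,
      ‖W j.castSucc‖ ^ (2 * α j - 2) * ‖W j.castSucc‖ ^ 2 = ‖W j.castSucc‖ ^ (2 * α j) := by
    intro j
    rw [← pow_add]
    congr 1
    have := hα j
    omega
  have h1 : ∀ j : Fin s,
      (inner ℂ (Ngrad α W j.castSucc) (W j.castSucc - τ⁻¹ • W j.castSucc) : ℂ)
        = (((1 - τ⁻¹) * ((α j : ℝ) * ‖W j.castSucc‖ ^ (2 * α j)) : ℝ) : ℂ) := by
    intro j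
    simp only [Ngrad, Fin.lastCases_castSucc]
    rw [hsm, hsm, inner_smul_left, inner_sub_right, inner_smul_right,
      inner_self_eq_norm_sq_to_K]
    rw [← hexp j]
    simp only [hco, map_mul, map_pow, Complex.conj_ofReal]
    push_cast
    ring
  have h2 : (inner ℂ (Ngrad α W (Fin.last s)) (W (Fin.last s) - τ⁻¹ • W (Fin.last s)) : ℂ)
      = (((1 - τ⁻¹) * ‖W (Fin.last s)‖ ^ 2 : ℝ) : ℂ) := by
    simp only [Ngrad, Fin.lastCases_last]
    rw [hsm, inner_sub_right, inner_smul_right, inner_self_eq_norm_sq_to_K]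
    simp only [hco]
    push_cast
    ring
  set S : ℝ := (∑ k : Fin s, (α k : ℝ) * ‖W k.castSucc‖ ^ (2 * α k)) + ‖W (Fin.last s)‖ ^ 2
    with hSdef
  set Q : ℝ := (∑ k : Fin s, (α k : ℝ) ^ 2 * ‖W k.castSucc‖ ^ (4 * α k - 2))
      + ‖W (Fin.last s)‖ ^ 2 with hQdef
  have hpair : (pairH (fun k => W k - τ⁻¹ • W k) (Ngrad α W)).re = (1 - τ⁻¹) * S := by
    simp only [pairH]
    rw [Fin.sum_univ_castSucc]
    simp only [h1, h2]
    rw [← Complex.ofReal_sum, ← Complex.ofReal_add, Complex.ofReal_re, hSdef,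
      mul_add, Finset.mul_sum]
  have hcoeff : ∀ j : Fin s, (0 : ℝ) ≤ (α j : ℝ) * ‖W j.castSucc‖ ^ (2 * α j - 2) := by
    intro j; positivity
  have hnormsum : (∑ k : Fin (s + 1), ‖Ngrad α W k‖ ^ 2) = Q := by
    rw [Fin.sum_univ_castSucc, hQdef]
    congr 1
    · apply Finset.sum_congr rfl
      intro j _
      simp only [Ngrad, Fin.lastCases_castSucc]
      rw [norm_smul, Real.norm_eq_abs, abs_of_nonneg (hcoeff j), mul_pow, mul_pow,
        ← pow_mul, mul_assoc, ← pow_add]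
      congr 2
      have := hα j
      omega
    · simp only [Ngrad, Fin.lastCases_last]
  have hnorm : normFull (Ngrad α W) = Real.sqrt Q := by rw [normFull, hnormsum]
  have hcon : (∑ j : Fin s, ‖W j.castSucc‖ ^ (2 * α j)) + ‖W (Fin.last s)‖ ^ 2 = 1 := by
    have := hW
    simp only [rho] at this
    linarith
  have hu0 : ∀ j : Fin s, (0 : ℝ) ≤ ‖W j.castSucc‖ ^ (2 * α j) := by
    intro j; positivity
  have hu1 : ∀ j : Fin s, ‖W j.castSucc‖ ^ (2 * α j) ≤ 1 := by
    intro j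
    have h := Finset.single_le_sum (f := fun j : Fin s => ‖W j.castSucc‖ ^ (2 * α j))
      (fun i _ => hu0 i) (mem_univ j)
    nlinarith [sq_nonneg ‖W (Fin.last s)‖]
  have hy1 : ∀ j : Fin s, ‖W j.castSucc‖ ≤ 1 := by
    intro j
    have hne : 2 * α j ≠ 0 := by have := hα j; omega
    exact (pow_le_one_iff_of_nonneg (norm_nonneg _) hne).1 (hu1 j)
  have hterm : ∀ j : Fin s, (α j : ℝ) ^ 2 * ‖W j.castSucc‖ ^ (4 * α j - 2)
      ≤ (2 * (α j : ℝ) - 1) * ‖W j.castSucc‖ ^ (2 * α j)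
        + ((α j : ℝ) - 1) ^ 2 * (‖W j.castSucc‖ ^ (2 * α j)) ^ 2 := by
    intro j
    obtain ⟨b, hb⟩ : ∃ b, α j = b + 2 := ⟨α j - 2, by have := hα j; omega⟩
    have hk := key_term b (‖W j.castSucc‖ ^ 2) (by positivity)
      (by nlinarith [hy1 j, norm_nonneg (W j.castSucc)])
    rw [← pow_mul, ← pow_mul, ← pow_mul] at hk
    rw [hb]
    rw [show 4 * (b + 2) - 2 = 2 * (2 * b + 3) from by omega, ← pow_mul,
      show 2 * (b + 2) * 2 = 2 * (2 * b + 4) from by ring]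
    push_cast
    nlinarith [hk]
  set P : ℝ := ∑ j : Fin s, ((α j : ℝ) - 1) * ‖W j.castSucc‖ ^ (2 * α j) with hPdef
  have hP0 : 0 ≤ P := by
    apply Finset.sum_nonneg
    intro j _
    have : (2 : ℝ) ≤ (α j : ℝ) := by exact_mod_cast hα j
    exact mul_nonneg (by linarith) (hu0 j)
  have hPsq : (∑ j : Fin s, (((α j : ℝ) - 1) * ‖W j.castSucc‖ ^ (2 * α j)) ^ 2) ≤ P ^ 2 := by
    rw [hPdef]
    apply Finset.sum_sq_le_sq_sum_of_nonneg
    intro j _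
    have : (2 : ℝ) ≤ (α j : ℝ) := by exact_mod_cast hα j
    exact mul_nonneg (by linarith) (hu0 j)
  have hsplit : (∑ j : Fin s, ((2 * (α j : ℝ) - 1) * ‖W j.castSucc‖ ^ (2 * α j)
        + ((α j : ℝ) - 1) ^ 2 * (‖W j.castSucc‖ ^ (2 * α j)) ^ 2))
      = (∑ j : Fin s, ‖W j.castSucc‖ ^ (2 * α j)) + 2 * P
        + ∑ j : Fin s, (((α j : ℝ) - 1) * ‖W j.castSucc‖ ^ (2 * α j)) ^ 2 := by
    rw [hPdef, Finset.mul_sum, ← Finset.sum_add_distrib, ← Finset.sum_add_distrib]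
    apply Finset.sum_congr rfl
    intro j _
    ring
  have hSP : S = 1 + P := by
    have hsum : (∑ k : Fin s, (α k : ℝ) * ‖W k.castSucc‖ ^ (2 * α k))
        = (∑ k : Fin s, ‖W k.castSucc‖ ^ (2 * α k)) + P := by
      rw [hPdef, ← Finset.sum_add_distrib]
      apply Finset.sum_congr rfl
      intro j _
      ring
    rw [hSdef, hsum]
    linarith [hcon]
  have hQS : Q ≤ S ^ 2 := by
    have hsum : (∑ j : Fin s, (α j : ℝ) ^ 2 * ‖W j.castSucc‖ ^ (4 * α j - 2))
        ≤ ∑ j : Fin s, ((2 * (α j : ℝ) - 1) * ‖W j.castSucc‖ ^ (2 * α j)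
          + ((α j : ℝ) - 1) ^ 2 * (‖W j.castSucc‖ ^ (2 * α j)) ^ 2) :=
      Finset.sum_le_sum fun j _ => hterm j
    rw [hQdef, hSP]
    rw [hsplit] at hsum
    nlinarith [hPsq, hcon]
  have hS1 : 1 ≤ S := by rw [hSP]; linarith
  have hsqrtQ : Real.sqrt Q ≤ S :=
    (Real.sqrt_le_sqrt hQS).trans_eq (Real.sqrt_sq (by linarith))
  have hQpos : 0 < Q := by
    by_contra h
    push_neg at h
    have hs0 : 0 ≤ ∑ j : Fin s, (α j : ℝ) ^ 2 * ‖W j.castSucc‖ ^ (4 * α j - 2) := by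
      apply Finset.sum_nonneg; intro j _; positivity
    have ht2 : (0:ℝ) ≤ ‖W (Fin.last s)‖ ^ 2 := by positivity
    have hsum0 : (∑ j : Fin s, (α j : ℝ) ^ 2 * ‖W j.castSucc‖ ^ (4 * α j - 2)) = 0 := by
      rw [hQdef] at h; linarith
    have hj := (Finset.sum_eq_zero_iff_of_nonneg (fun j _ => by positivity)).1 hsum0
    have hy0 : ∀ j : Fin s, ‖W j.castSucc‖ ^ (2 * α j) = 0 := by
      intro j
      have hαj : ((α j : ℝ)) ^ 2 ≠ 0 := by
        have h2 := hα j
        have : (0:ℝ) < (α j : ℝ) := by exact_mod_cast Nat.lt_of_lt_of_le Nat.zero_lt_two h2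
        positivity
      have h4 : ‖W j.castSucc‖ ^ (4 * α j - 2) = 0 := by
        have := hj j (mem_univ j)
        exact (mul_eq_zero.1 this).resolve_left hαj
      have hn0 : ‖W j.castSucc‖ = 0 := by
        have hne : 4 * α j - 2 ≠ 0 := by have := hα j; omega
        exact pow_eq_zero_iff hne |>.1 h4
      rw [hn0]
      exact zero_pow (by have := hα j; omega)
    have ht0 : ‖W (Fin.last s)‖ ^ 2 = 0 := by rw [hQdef] at h; linarith
    rw [Finset.sum_eq_zero (fun j _ => hy0 j), ht0] at hcon
    norm_num at hcon
  have hτ1 : (1 : ℝ) ≤ τ := hT.trans hτ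
  have hτ0 : (0 : ℝ) < τ := by linarith
  have h1τ : 0 ≤ 1 - 1 / τ := by
    have : 1 / τ ≤ 1 := by rw [div_le_one hτ0]; exact hτ1
    linarith
  have heq : (pairH (fun k => W k - τ⁻¹ • W k) (Ngrad α W)).re / normFull (Ngrad α W)
      = (1 - 1 / τ) * S / Real.sqrt Q := by
    rw [hpair, hnorm, one_div]
  refine ⟨heq, ?_, ?_⟩
  · rw [heq, le_div_iff₀ (Real.sqrt_pos.2 hQpos)]
    exact mul_le_mul_of_nonneg_left hsqrtQ h1τ
  · have hT0 : (0 : ℝ) < T := by linarith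
    have := one_div_le_one_div_of_le hT0 hτ
    linarith
end
end

section
/- There exist a positive strictly increasing sequence {a_ℓ} and a positive strictly decreasing sequence {ε_ℓ} such that: (i) Σ_{k=1}^{t+1} a_ℓ^{2β_k} strictly increases to 1 as ℓ → ∞; (ii) ε_ℓ → 0, Σ_ℓ ε_ℓ^{1/2} < ∞, and Σ_ℓ ε_ℓ^{max{β_k}/(2t+2)} = ∞; (iii) Σ_{k=1}^{t+1} a_{ℓ−1}^{2β_k} + ε_ℓ < Σ_{k=1}^{t+1} a_ℓ^{2β_k} for all ℓ ≥ 1. -/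
open scoped BigOperators
open Finset Filter

noncomputable section

/-- Existence of the sequences `{a_ℓ}` and `{ε_ℓ}` used in the inductive
construction: `Σ_k a_ℓ^{2β_k}` strictly increases to `1`, `ε_ℓ ↓ 0` with
`Σ ε_ℓ^{1/2} < ∞` and `Σ ε_ℓ^{max β_k/(2t+2)} = ∞`, and the gap condition
`Σ_k a_{ℓ−1}^{2β_k} + ε_ℓ < Σ_k a_ℓ^{2β_k}` holds. -/
theorem sequences_exist (t : ℕ) (β : Fin (t + 1) → ℕ)
    (hβlast : β (Fin.last t) = 1)
    (hβ : ∀ k : Fin (t + 1), (k : ℕ) < t → 2 ≤ β k)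
    (hmax : ∀ k, β k < t + 1) :
    ∃ a ε : ℕ → ℝ,
      StrictMono a ∧ (∀ n, 0 < a n) ∧
      StrictAnti ε ∧ (∀ n, 0 < ε n) ∧
      StrictMono (fun n => ∑ k, a n ^ (2 * β k)) ∧
      (∀ n, ∑ k, a n ^ (2 * β k) < 1) ∧
      Tendsto (fun n => ∑ k, a n ^ (2 * β k)) atTop (nhds 1) ∧
      Tendsto ε atTop (nhds 0) ∧
      Summable (fun n => ε n ^ ((1 : ℝ) / 2)) ∧
      ¬ Summable (fun n => ε n ^ (((Finset.univ.sup β : ℕ) : ℝ) / (2 * (t : ℝ) + 2))) ∧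
      (∀ n : ℕ, 1 ≤ n →
        (∑ k, a (n - 1) ^ (2 * β k)) + ε n < ∑ k, a n ^ (2 * β k)) := by
  classical
  -- basic facts about β
  have hβpos : ∀ k, 1 ≤ β k := by
    intro k
    rcases lt_or_ge (k : ℕ) t with h | h
    · exact le_trans one_le_two (hβ k h)
    · have hk : k = Fin.last t := by
        apply Fin.ext
        have := k.isLt
        simp only [Fin.val_last]
        omega
      rw [hk, hβlast]
  set m : ℕ := Finset.univ.sup β with hmdef
  have hm1 : 1 ≤ m := by
    have := Finset.le_sup (f := β) (Finset.mem_univ (Fin.last t))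
    rw [hβlast] at this
    exact this
  have hm2 : m ≤ t := by
    have : m < t + 1 := (Finset.sup_lt_iff (by positivity)).mpr fun k _ => hmax k
    omega
  -- the exponent q and γ = 1/q
  set q : ℝ := (m : ℝ) / (2 * (t : ℝ) + 2) with hqdef
  have ht0 : (0:ℝ) < 2 * (t : ℝ) + 2 := by positivity
  have hq0 : 0 < q := div_pos (by exact_mod_cast hm1) ht0
  have hqhalf : q < 1 / 2 := by
    rw [hqdef, div_lt_div_iff₀ ht0 (by norm_num)]
    have : (m : ℝ) ≤ (t : ℝ) := by exact_mod_cast hm2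
    linarith
  set γ : ℝ := 1 / q with hγdef
  have hγ2 : 2 < γ := by
    rw [hγdef, lt_div_iff₀ hq0]
    linarith
  have hγ0 : 0 < γ := by linarith
  have hγq : γ * q = 1 := by
    rw [hγdef]
    field_simp
  -- ε
  set ε : ℕ → ℝ := fun n => (1 / 12) * ((n : ℝ) + 1) ^ (-γ) with hεdef
  have hεpos : ∀ n, 0 < ε n := by
    intro n
    have : (0:ℝ) < (n : ℝ) + 1 := by positivity
    positivity
  have hεanti : StrictAnti ε := by
    intro i j hij
    have hi : (0:ℝ) < (i : ℝ) + 1 := by positivity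
    have hij' : (i : ℝ) + 1 < (j : ℝ) + 1 := by
      have : (i:ℝ) < j := by exact_mod_cast hij
      linarith
    have := Real.rpow_lt_rpow_of_neg hi hij' (neg_neg_iff_pos.mpr hγ0)
    simp only [hεdef]
    nlinarith
  -- s and S
  set s : ℕ → ℝ := fun n => 1 - 1 / ((n : ℝ) + 2) with hsdef
  have hs01 : ∀ n, 0 < s n ∧ s n < 1 := by
    intro n
    have h2 : (0:ℝ) < (n : ℝ) + 2 := by positivity
    constructor
    · have : 1 / ((n:ℝ) + 2) ≤ 1 / 2 := by
        apply one_div_le_one_div_of_le <;> [norm_num; linarith [Nat.cast_nonneg (α := ℝ) n]]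
      simp only [hsdef]; linarith
    · simp only [hsdef]
      have : 0 < 1 / ((n:ℝ) + 2) := by positivity
      linarith
  have hsmono : StrictMono s := by
    apply strictMono_nat_of_lt_succ
    intro n
    simp only [hsdef]
    have h1 : (0:ℝ) < (n:ℝ) + 2 := by positivity
    have : 1 / ((n:ℝ) + 1 + 2) < 1 / ((n:ℝ) + 2) := by
      apply one_div_lt_one_div_of_lt h1
      push_cast; linarith
    push_cast
    linarith
  set S : ℝ → ℝ := fun x => ∑ k, x ^ (2 * β k) with hSdef
  have hS0 : S 0 = 0 := by
    simp only [hSdef]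
    apply Finset.sum_eq_zero
    intro k _
    exact zero_pow (by have := hβpos k; omega)
  have hS1 : S 1 = (t : ℝ) + 1 := by
    simp [hSdef]
  have hScont : Continuous S := by
    apply continuous_finset_sum
    intro k _
    exact continuous_pow _
  have hSlt : ∀ {x y : ℝ}, 0 ≤ x → x < y → S x < S y := by
    intro x y hx hxy
    apply Finset.sum_lt_sum_of_nonempty Finset.univ_nonempty
    intro k _
    exact pow_lt_pow_left₀ hxy hx (by have := hβpos k; omega)
  -- construct a via IVT
  have hIVT : ∀ n, ∃ x, x ∈ Set.Ioo (0:ℝ) 1 ∧ S x = s n := by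
    intro n
    have hsub := intermediate_value_Ioo (le_of_lt one_pos) hScont.continuousOn (a := (0:ℝ)) (b := 1)
    have hmem : s n ∈ Set.Ioo (S 0) (S 1) := by
      rw [hS0, hS1]
      refine ⟨(hs01 n).1, ?_⟩
      have := (hs01 n).2
      have ht : (0:ℝ) ≤ t := Nat.cast_nonneg t
      linarith
    obtain ⟨x, hx, hxe⟩ := hsub hmem
    exact ⟨x, hx, hxe⟩
  choose a ha hSa using hIVT
  have hapos : ∀ n, 0 < a n := fun n => (ha n).1
  have hamono : StrictMono a := by
    intro i j hij
    have h1 : S (a i) < S (a j) := by rw [hSa, hSa]; exact hsmono hij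
    by_contra h
    push_neg at h
    rcases eq_or_lt_of_le h with h' | h'
    · rw [h'] at h1; exact lt_irrefl _ h1
    · exact absurd h1 (not_lt.mpr (le_of_lt (hSlt (hapos j).le h')))
  have hsumeq : (fun n => ∑ k, a n ^ (2 * β k)) = s := funext hSa
  refine ⟨a, ε, hamono, hapos, hεanti, hεpos, ?_, ?_, ?_, ?_, ?_, ?_, ?_⟩
  · rw [hsumeq]; exact hsmono
  · intro n
    have : (∑ k, a n ^ (2 * β k)) = s n := hSa n
    rw [this]; exact (hs01 n).2
  · rw [hsumeq]
    have h2 : Tendsto (fun n : ℕ => ((n:ℝ) + 2)) atTop atTop :=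
      tendsto_atTop_add_const_right _ _ tendsto_natCast_atTop_atTop
    have h3 : Tendsto (fun n : ℕ => 1 / ((n:ℝ) + 2)) atTop (nhds 0) := by
      simp only [one_div]; exact h2.inv_tendsto_atTop
    have := tendsto_const_nhds (x := (1:ℝ)) (f := atTop (α := ℕ)) |>.sub h3
    simpa [hsdef, one_div] using this
  · have h2 : Tendsto (fun n : ℕ => ((n:ℝ) + 1)) atTop atTop :=
      tendsto_atTop_add_const_right _ _ tendsto_natCast_atTop_atTop
    have h3 : Tendsto (fun n : ℕ => ((n:ℝ) + 1) ^ (-γ)) atTop (nhds 0) :=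
      (tendsto_rpow_neg_atTop hγ0).comp h2
    have := h3.const_mul (1/12 : ℝ)
    simpa [hεdef] using this
  · -- Summable ε ^ (1/2)
    have key : ∀ n : ℕ, ε n ^ ((1:ℝ)/2)
        = (1/12 : ℝ) ^ ((1:ℝ)/2) * ((n:ℝ) + 1) ^ (-(γ/2)) := by
      intro n
      have h1 : (0:ℝ) ≤ (n:ℝ) + 1 := by positivity
      rw [hεdef]
      rw [Real.mul_rpow (by norm_num) (Real.rpow_nonneg h1 _), ← Real.rpow_mul h1]
      ring_nf
    rw [show (fun n => ε n ^ ((1:ℝ)/2)) = fun n : ℕ => (1/12 : ℝ) ^ ((1:ℝ)/2) * ((n:ℝ) + 1) ^ (-(γ/2)) from funext key]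
    apply Summable.mul_left
    have hbase : Summable (fun n : ℕ => (n:ℝ) ^ (-(γ/2))) :=
      Real.summable_nat_rpow.mpr (by linarith)
    have := (summable_nat_add_iff 1).mpr hbase
    simpa [Nat.cast_add] using this
  · -- not summable ε ^ q
    intro hcontra
    have key : ∀ n : ℕ, ε n ^ q
        = (1/12 : ℝ) ^ q * ((n:ℝ) + 1) ^ (-1 : ℝ) := by
      intro n
      have h1 : (0:ℝ) ≤ (n:ℝ) + 1 := by positivity
      rw [hεdef]
      rw [Real.mul_rpow (by norm_num) (Real.rpow_nonneg h1 _), ← Real.rpow_mul h1]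
      rw [show -γ * q = -1 by rw [neg_mul, hγq]]
    rw [show (fun n => ε n ^ (((Finset.univ.sup β : ℕ) : ℝ) / (2 * (t : ℝ) + 2))) = fun n : ℕ => (1/12 : ℝ) ^ q * ((n:ℝ) + 1) ^ (-1 : ℝ) from funext key] at hcontra
    have hc : ((1:ℝ)/12) ^ q ≠ 0 := by positivity
    have h4 : Summable (fun n : ℕ => ((n:ℝ) + 1) ^ (-1 : ℝ)) :=
      (summable_mul_left_iff hc).mp hcontra
    have h5 : Summable (fun n : ℕ => ((n:ℝ)) ^ (-1 : ℝ)) :=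
      (summable_nat_add_iff 1).mp (by simpa [Nat.cast_add] using h4)
    have := Real.summable_nat_rpow.mp h5
    linarith
  · -- gap condition
    intro n hn
    obtain ⟨p, rfl⟩ : ∃ p, n = p + 1 := ⟨n - 1, by omega⟩
    show S (a (p + 1 - 1)) + ε (p + 1) < S (a (p + 1))
    have hred : p + 1 - 1 = p := rfl
    rw [hred, hSa, hSa]
    -- show s p + ε (p+1) < s (p+1)
    have hεval : ε (p + 1) = (1/12 : ℝ) * ((p:ℝ) + 2) ^ (-γ) := by
      simp only [hεdef]
      push_cast
      ring_nf
    have hb : (1:ℝ) ≤ (p:ℝ) + 2 := by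
      have : (0:ℝ) ≤ p := Nat.cast_nonneg p
      linarith
    have h1 : ((p:ℝ) + 2) ^ (-γ) ≤ ((p:ℝ) + 2) ^ (-(2:ℝ)) :=
      Real.rpow_le_rpow_of_exponent_le hb (by linarith)
    have h2 : ((p:ℝ) + 2) ^ (-(2:ℝ)) = (((p:ℝ) + 2) ^ (2:ℕ))⁻¹ := by
      rw [← Real.rpow_natCast ((p:ℝ)+2) 2, ← Real.rpow_neg (by linarith)]
      norm_num
    have hP0 : (0:ℝ) ≤ (p:ℝ) := Nat.cast_nonneg p
    have hgoal : (1/12 : ℝ) * (((p:ℝ) + 2) ^ (2:ℕ))⁻¹ < 1 / ((p:ℝ) + 2) - 1 / ((p:ℝ) + 3) := by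
      have hA : (0:ℝ) < (p:ℝ) + 2 := by linarith
      have hB : (0:ℝ) < (p:ℝ) + 3 := by linarith
      have hdiff : 1 / ((p:ℝ) + 2) - 1 / ((p:ℝ) + 3) = 1 / (((p:ℝ) + 2) * ((p:ℝ) + 3)) := by
        field_simp
        ring
      rw [hdiff]
      rw [show (1/12 : ℝ) * (((p:ℝ) + 2) ^ (2:ℕ))⁻¹ = 1 / (12 * ((p:ℝ) + 2) ^ (2:ℕ)) by
        field_simp]
      rw [div_lt_div_iff₀ (by positivity) (by positivity)]
      nlinarith
    have hεbound : ε (p + 1) < 1 / ((p:ℝ) + 2) - 1 / ((p:ℝ) + 3) := by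
      rw [hεval]
      calc (1/12 : ℝ) * ((p:ℝ) + 2) ^ (-γ)
          ≤ (1/12 : ℝ) * ((p:ℝ) + 2) ^ (-(2:ℝ)) := by
            apply mul_le_mul_of_nonneg_left h1 (by norm_num)
        _ = (1/12 : ℝ) * (((p:ℝ) + 2) ^ (2:ℕ))⁻¹ := by rw [h2]
        _ < _ := hgoal
    simp only [hsdef]
    have h33 : ((p:ℝ) + 1 + 2) = (p:ℝ) + 3 := by ring
    push_cast
    rw [h33]
    linarith
end
end

section
/- There exists a continuous real-valued function u on the unit circle ∂Δ such that the boundary values v of the harmonic conjugate ṽ of the harmonic extension ũ of u to the unit disc Δ fail to be continuous; consequently, for any ι > 0, the holomorphic function h(z) = ι·exp(ũ(z) + iṽ(z)) on Δ is bounded, |h| = ι·e^{ũ} extends continuously to Δ̄, but h itself does not extend continuously to Δ̄. -/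
open Metric Filter

noncomputable section

namespace NonExtAux

/-- auxiliary function `w z = 1 - log (1 - z)` -/
def w (z : ℂ) : ℂ := 1 - Complex.log (1 - z)

/-- the holomorphic function -/
def gg (z : ℂ) : ℂ := Complex.I * Complex.log (w z)

/-- the continuous boundary extension of `Re gg` -/
def UU (z : ℂ) : ℝ := -Complex.arg (w z)

lemma w_re (z : ℂ) : (w z).re = 1 - Real.log (‖1 - z‖) := by
  simp [w, Complex.sub_re, Complex.log_re]

lemma w_im (z : ℂ) : (w z).im = -Complex.arg (1 - z) := by
  simp [w, Complex.sub_im, Complex.log_im]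

lemma abs_one_sub_le {z : ℂ} (hz : z ∈ closedBall (0:ℂ) 1) :
    ‖1 - z‖ ≤ 2 := by
  have h : ‖z‖ ≤ 1 := by
    simpa [Metric.mem_closedBall, Complex.dist_eq] using hz
  calc ‖1 - z‖ ≤ ‖(1:ℂ)‖ + ‖z‖ := by
        simpa [sub_eq_add_neg] using norm_add_le (1:ℂ) (-z)
    _ ≤ 2 := by simp only [norm_one]; linarith

lemma w_re_pos {z : ℂ} (hz : z ∈ closedBall (0:ℂ) 1) : 0 < (w z).re := by
  rw [w_re]
  have hlog2 : Real.log 2 < 1 := by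
    have := Real.log_two_lt_d9
    norm_num at this ⊢
    linarith
  have h2 : Real.log (‖1 - z‖) ≤ Real.log 2 := by
    rcases eq_or_lt_of_le (norm_nonneg (1 - z)) with h | h
    · rw [← h, Real.log_zero]
      exact (Real.log_pos one_lt_two).le
    · exact Real.log_le_log h (abs_one_sub_le hz)
  linarith

lemma w_slit {z : ℂ} (hz : z ∈ closedBall (0:ℂ) 1) : w z ∈ Complex.slitPlane :=
  Complex.mem_slitPlane_iff.mpr (Or.inl (w_re_pos hz))

lemma re_lt_one {z : ℂ} (hz : z ∈ closedBall (0:ℂ) 1) (h1 : z ≠ 1) : z.re < 1 := by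
  have habs : ‖z‖ ≤ 1 := by
    simpa [Metric.mem_closedBall, Complex.dist_eq] using hz
  have hre : z.re ≤ ‖z‖ := Complex.re_le_norm z
  by_contra hlt
  push_neg at hlt
  have hre1 : z.re = 1 := le_antisymm (hre.trans habs) hlt
  have hsq : z.re ^ 2 + z.im ^ 2 ≤ 1 := by
    have h := Complex.sq_norm z
    rw [Complex.normSq_apply] at h
    nlinarith [norm_nonneg z]
  have him : z.im = 0 := by nlinarith [sq_nonneg z.im]
  exact h1 (Complex.ext (by simp [hre1]) (by simp [him]))

lemma one_sub_slit {z : ℂ} (hz : z ∈ closedBall (0:ℂ) 1) (h1 : z ≠ 1) :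
    (1 - z) ∈ Complex.slitPlane := by
  refine Complex.mem_slitPlane_iff.mpr (Or.inl ?_)
  have := re_lt_one hz h1
  simp only [Complex.sub_re, Complex.one_re]
  linarith

lemma gg_re {z : ℂ} : (gg z).re = UU z := by
  simp [gg, UU, Complex.mul_re, Complex.I_re, Complex.I_im, Complex.log_im]

lemma gg_diff : DifferentiableOn ℂ gg (ball (0 : ℂ) 1) := by
  intro z hz
  have hz' : z ∈ closedBall (0:ℂ) 1 := ball_subset_closedBall hz
  have hz1 : z ≠ 1 := by
    intro h
    rw [h] at hz
    simp [Metric.mem_ball, Complex.dist_eq] at hz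
  have h1 : DifferentiableAt ℂ (fun z : ℂ => 1 - z) z :=
    (differentiableAt_const 1).sub differentiableAt_id
  have h2 : DifferentiableAt ℂ (fun z : ℂ => Complex.log (1 - z)) z :=
    h1.clog (one_sub_slit hz' hz1)
  have h3 : DifferentiableAt ℂ w z := (differentiableAt_const 1).sub h2
  exact ((differentiableAt_const Complex.I).mul (h3.clog (w_slit hz'))).differentiableWithinAt

lemma UU_cont : ContinuousOn UU (closedBall (0:ℂ) 1) := by
  intro z hz
  by_cases h1 : z = 1
  · subst h1
    rw [← continuousWithinAt_diff_self]
    have hU1 : UU 1 = 0 := by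
      simp [UU, w, Complex.log_zero]
    unfold ContinuousWithinAt
    rw [hU1]
    set s : Set ℂ := closedBall (0:ℂ) 1 \ {1} with hs
    -- the quotient im/abs tends to 0
    have habs1 : Tendsto (fun z : ℂ => ‖1 - z‖) (nhdsWithin 1 s) (nhdsWithin 0 (Set.Ioi 0)) := by
      rw [tendsto_nhdsWithin_iff]
      constructor
      · have hc : Continuous fun z : ℂ => ‖1 - z‖ :=
          continuous_norm.comp (continuous_const.sub continuous_id)
        have := hc.tendsto 1
        simp only [sub_self, norm_zero] at this
        exact this.mono_left nhdsWithin_le_nhds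
      · filter_upwards [self_mem_nhdsWithin] with x hx
        have : (1 : ℂ) - x ≠ 0 := sub_ne_zero.mpr fun h => hx.2 h.symm
        simpa [Set.mem_Ioi] using (norm_pos_iff.mpr this)
    have hlog : Tendsto (fun z : ℂ => Real.log (‖1 - z‖)) (nhdsWithin 1 s) Filter.atBot :=
      Real.tendsto_log_nhdsGT_zero.comp habs1
    have hre : Tendsto (fun z : ℂ => (w z).re) (nhdsWithin 1 s) Filter.atTop := by
      have hneg : Tendsto (fun z : ℂ => -Real.log (‖1 - z‖)) (nhdsWithin 1 s) Filter.atTop :=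
        Filter.tendsto_neg_atBot_atTop.comp hlog
      have := Filter.tendsto_atTop_add_const_left _ (1 : ℝ) hneg
      refine this.congr fun z => ?_
      rw [w_re]; ring
    have hdiv : Tendsto (fun z : ℂ => Real.pi / (w z).re) (nhdsWithin 1 s) (nhds 0) :=
      Filter.Tendsto.div_atTop tendsto_const_nhds hre
    have hq : Tendsto (fun z : ℂ => (w z).im / ‖w z‖) (nhdsWithin 1 s) (nhds 0) := by
      refine squeeze_zero_norm' ?_ hdiv
      filter_upwards [self_mem_nhdsWithin] with x hx
      have hrepos := w_re_pos hx.1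
      have him : |(w x).im| ≤ Real.pi := by
        rw [w_im, abs_neg]; exact Complex.abs_arg_le_pi _
      have habs : (w x).re ≤ ‖w x‖ := Complex.re_le_norm _
      have habs0 : 0 < ‖w x‖ := lt_of_lt_of_le hrepos habs
      rw [Real.norm_eq_abs, abs_div, abs_of_pos habs0]
      calc |(w x).im| / ‖w x‖ ≤ Real.pi / ‖w x‖ := by gcongr
        _ ≤ Real.pi / (w x).re := by gcongr
    have harcsin : Tendsto (fun z : ℂ => -Real.arcsin ((w z).im / ‖w z‖))
        (nhdsWithin 1 s) (nhds 0) := by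
      have := (Real.continuous_arcsin.tendsto 0).comp hq
      simp only [Real.arcsin_zero] at this
      simpa using this.neg
    refine harcsin.congr' ?_
    filter_upwards [self_mem_nhdsWithin] with x hx
    rw [UU, Complex.arg_of_re_nonneg (w_re_pos hx.1).le]
  · apply ContinuousAt.continuousWithinAt
    have hw : ContinuousAt w z := by
      have h2 : ContinuousAt (fun z : ℂ => Complex.log (1 - z)) z :=
        ContinuousAt.clog (continuous_const.sub continuous_id).continuousAt
          (one_sub_slit hz h1)
      exact continuous_const.continuousAt.sub h2
    exact ((Complex.continuousAt_arg (w_slit hz)).comp hw).neg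

/-- the radial parametrization on which `gg` is purely imaginary -/
def rr (T : ℝ) : ℝ := 1 - Real.exp (1 - Real.exp T)

lemma rr_mem {T : ℝ} (hT : 0 < T) : ((rr T : ℝ) : ℂ) ∈ ball (0:ℂ) 1 := by
  have h1 : Real.exp (1 - Real.exp T) < 1 := by
    rw [Real.exp_lt_one_iff]
    have : (1 : ℝ) < Real.exp T := by
      calc (1:ℝ) = Real.exp 0 := Real.exp_zero.symm
        _ < Real.exp T := Real.exp_lt_exp.mpr hT
    linarith
  have h0 : 0 < Real.exp (1 - Real.exp T) := Real.exp_pos _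
  have : |rr T| < 1 := by
    rw [abs_lt]; constructor <;> [skip; skip] <;> simp [rr] <;> linarith
  simpa [Metric.mem_ball, Complex.dist_eq, Complex.norm_real, Real.norm_eq_abs] using this

lemma gg_rr {T : ℝ} (hT : 0 < T) : gg ((rr T : ℝ) : ℂ) = (T : ℂ) * Complex.I := by
  have h0 : (0:ℝ) ≤ Real.exp (1 - Real.exp T) := (Real.exp_pos _).le
  have h1 : (1 : ℂ) - ((rr T : ℝ) : ℂ) = ((Real.exp (1 - Real.exp T) : ℝ) : ℂ) := by
    simp [rr]
  rw [gg, w, h1, ← Complex.ofReal_log h0, Real.log_exp]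
  have h2 : (1:ℂ) - ((1 - Real.exp T : ℝ) : ℂ) = ((Real.exp T : ℝ) : ℂ) := by
    push_cast; ring
  rw [h2, ← Complex.ofReal_log (Real.exp_pos T).le, Real.log_exp]
  ring

lemma exp_gg_rr {T : ℝ} (hT : 0 < T) :
    Complex.exp (gg ((rr T : ℝ) : ℂ)) = (Real.cos T : ℂ) + (Real.sin T : ℂ) * Complex.I := by
  rw [gg_rr hT, Complex.exp_mul_I, Complex.ofReal_cos, Complex.ofReal_sin]

lemma rr_tendsto : Tendsto rr Filter.atTop (nhds 1) := by
  have h1 : Tendsto (fun T : ℝ => 1 - Real.exp T) Filter.atTop Filter.atBot := by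
    have := Filter.tendsto_neg_atTop_atBot.comp Real.tendsto_exp_atTop
    have h := Filter.tendsto_atBot_add_const_left _ (1 : ℝ) this
    refine h.congr fun T => ?_
    show 1 + -Real.exp T = 1 - Real.exp T
    ring
  have h2 : Tendsto (fun T : ℝ => Real.exp (1 - Real.exp T)) Filter.atTop (nhds 0) :=
    Real.tendsto_exp_atBot.comp h1
  have h3 : Tendsto (fun T : ℝ => 1 - Real.exp (1 - Real.exp T)) Filter.atTop (nhds (1 - 0)) :=
    tendsto_const_nhds.sub h2
  simp only [sub_zero] at h3
  exact h3

end NonExtAux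

open NonExtAux in
/-- There is a holomorphic function `g = ũ + iṽ` on the unit disc whose real
part extends continuously to the closed disc (its boundary value is the
continuous function `u` on the circle), but such that for every `ι > 0` the
bounded holomorphic function `h = ι·exp(g)` — whose modulus `|h| = ι e^{ũ}`
extends continuously to the closed disc — does not itself extend continuously
to the closed disc (the boundary values of the conjugate function `ṽ` fail to
be continuous). -/
theorem exists_nonextendable_exponential :
    ∃ g : ℂ → ℂ, DifferentiableOn ℂ g (ball (0 : ℂ) 1) ∧
      (∃ U : ℂ → ℝ, ContinuousOn U (closedBall (0 : ℂ) 1) ∧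
        ∀ z ∈ ball (0 : ℂ) 1, U z = (g z).re) ∧
      ∀ ι : ℝ, 0 < ι →
        (∃ C : ℝ, ∀ z ∈ ball (0 : ℂ) 1,
          ‖(ι : ℂ) * Complex.exp (g z)‖ ≤ C) ∧
        (∃ A : ℂ → ℝ, ContinuousOn A (closedBall (0 : ℂ) 1) ∧
          ∀ z ∈ ball (0 : ℂ) 1,
            A z = ‖(ι : ℂ) * Complex.exp (g z)‖) ∧
        ¬ ∃ H : ℂ → ℂ, ContinuousOn H (closedBall (0 : ℂ) 1) ∧
          ∀ z ∈ ball (0 : ℂ) 1, H z = (ι : ℂ) * Complex.exp (g z) := by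
  refine ⟨gg, gg_diff, ⟨UU, UU_cont, fun z _ => gg_re.symm⟩, fun ι hι => ⟨?_, ?_, ?_⟩⟩
  · -- boundedness
    refine ⟨ι * Real.exp Real.pi, fun z hz => ?_⟩
    rw [norm_mul, Complex.norm_exp, Complex.norm_real, Real.norm_eq_abs, abs_of_pos hι]
    have h1 : (gg z).re ≤ Real.pi := by
      rw [gg_re, UU]
      have := Complex.neg_pi_lt_arg (w z)
      linarith
    have := Real.exp_le_exp.mpr h1
    nlinarith [Real.exp_pos (gg z).re]
  · -- continuous modulus
    refine ⟨fun z => ι * Real.exp (UU z), continuousOn_const.mul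
      (Real.continuous_exp.comp_continuousOn UU_cont), fun z hz => ?_⟩
    rw [norm_mul, Complex.norm_exp, Complex.norm_real, Real.norm_eq_abs, abs_of_pos hι, gg_re]
  · -- nonextendability
    rintro ⟨H, Hcont, HEq⟩
    have hpi := Real.pi_pos
    -- two sequences of parameters
    set T1 : ℕ → ℝ := fun n => ((n : ℝ) + 1) * (2 * Real.pi) with hT1
    set T2 : ℕ → ℝ := fun n => Real.pi + (n : ℝ) * (2 * Real.pi) with hT2
    have hT1pos : ∀ n, 0 < T1 n := fun n => by positivity
    have hT2pos : ∀ n, 0 < T2 n := fun n => by positivity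
    have hcos1 : ∀ n, Real.cos (T1 n) = 1 := fun n => by
      have := Real.cos_nat_mul_two_pi (n + 1)
      rwa [Nat.cast_add, Nat.cast_one] at this
    have hsin1 : ∀ n, Real.sin (T1 n) = 0 := fun n => by
      have := Real.sin_nat_mul_pi (2 * (n + 1))
      rw [Nat.cast_mul, Nat.cast_add, Nat.cast_one, Nat.cast_ofNat] at this
      rw [hT1]
      convert this using 2
      ring
    have hcos2 : ∀ n, Real.cos (T2 n) = -1 := fun n => by
      show Real.cos (Real.pi + (n : ℝ) * (2 * Real.pi)) = -1
      rw [Real.cos_add_nat_mul_two_pi, Real.cos_pi]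
    have hsin2 : ∀ n, Real.sin (T2 n) = 0 := fun n => by
      show Real.sin (Real.pi + (n : ℝ) * (2 * Real.pi)) = 0
      rw [Real.sin_add_nat_mul_two_pi, Real.sin_pi]
    -- values of H along the sequences
    have hv1 : ∀ n, H ((rr (T1 n) : ℝ) : ℂ) = (ι : ℂ) := fun n => by
      rw [HEq _ (rr_mem (hT1pos n)), exp_gg_rr (hT1pos n), hcos1, hsin1]
      simp
    have hv2 : ∀ n, H ((rr (T2 n) : ℝ) : ℂ) = -(ι : ℂ) := fun n => by
      rw [HEq _ (rr_mem (hT2pos n)), exp_gg_rr (hT2pos n), hcos2, hsin2]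
      simp
    -- the sequences tend to 1 within the closed ball
    have hmem : (1 : ℂ) ∈ closedBall (0:ℂ) 1 := by
      simp [Metric.mem_closedBall, Complex.dist_eq]
    have hHtend : Tendsto H (nhdsWithin 1 (closedBall (0:ℂ) 1)) (nhds (H 1)) :=
      Hcont 1 hmem
    have key : ∀ T : ℕ → ℝ, (∀ n, 0 < T n) → Tendsto T Filter.atTop Filter.atTop →
        Tendsto (fun n => ((rr (T n) : ℝ) : ℂ)) Filter.atTop
          (nhdsWithin 1 (closedBall (0:ℂ) 1)) := by
      intro T hTpos hTtop
      rw [tendsto_nhdsWithin_iff]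
      constructor
      · have := (Complex.continuous_ofReal.tendsto 1).comp (rr_tendsto.comp hTtop)
        simpa [Function.comp_def] using this
      · filter_upwards with n
        exact ball_subset_closedBall (rr_mem (hTpos n))
    have hT1top : Tendsto T1 Filter.atTop Filter.atTop := by
      apply Filter.tendsto_atTop_mono (f := fun n : ℕ => (n : ℝ))
      · intro n
        have : (0:ℝ) ≤ (n:ℝ) := Nat.cast_nonneg n
        show (n:ℝ) ≤ ((n:ℝ) + 1) * (2 * Real.pi)
        nlinarith [Real.pi_gt_three]
      · exact tendsto_natCast_atTop_atTop
    have hT2top : Tendsto T2 Filter.atTop Filter.atTop := by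
      apply Filter.tendsto_atTop_mono (f := fun n : ℕ => (n : ℝ))
      · intro n
        have : (0:ℝ) ≤ (n:ℝ) := Nat.cast_nonneg n
        show (n:ℝ) ≤ Real.pi + (n:ℝ) * (2 * Real.pi)
        nlinarith [Real.pi_gt_three]
      · exact tendsto_natCast_atTop_atTop
    have hlim1 : Tendsto (fun n => H ((rr (T1 n) : ℝ) : ℂ)) Filter.atTop (nhds (H 1)) :=
      hHtend.comp (key T1 hT1pos hT1top)
    have hlim2 : Tendsto (fun n => H ((rr (T2 n) : ℝ) : ℂ)) Filter.atTop (nhds (H 1)) :=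
      hHtend.comp (key T2 hT2pos hT2top)
    have e1 : H 1 = (ι : ℂ) := by
      refine tendsto_nhds_unique hlim1 ?_
      simp only [hv1]
      exact tendsto_const_nhds
    have e2 : H 1 = -(ι : ℂ) := by
      refine tendsto_nhds_unique hlim2 ?_
      simp only [hv2]
      exact tendsto_const_nhds
    rw [e1] at e2
    have : ι = -ι := by exact_mod_cast e2
    linarith
end
end
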